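/- The set E₊ of positive equilibria is nonempty. Moreover, for any fixed x̄ ∈ E₊ and any x ∈ (0,∞)ⁿ, one has x ∈ E₊ if and only if ρ⃗(x) − ρ⃗(x̄) ∈ D^⊥, i.e. if and only if ⟨b_i − b_j, ρ⃗(x) − ρ⃗(x̄)⟩ = 0 for all i, j ∈ {1,…,m}. -/

import Mathlib

/-!
Write `v(x)_j = ∏ₗ θ(xₗ) ^ B l j` for the monomial of the complex `b_j` and
`L = A - diag(column sums of A)`; then `f(x) = B (L v(x))`, and since `B` has full column rank,
`x` is an equilibrium iff `v(x) ∈ ker L`. For nonnegative irreducible `A` this kernel is a line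
spanned by a positive vector, by a Perron–Frobenius argument: `1ᵀ L = 0` gives a nonzero kernel
vector, its absolute value stays in the kernel because the columns of `L` sum to zero, and a
nonnegative kernel vector with a zero entry vanishes by irreducibility. So the positive
equilibria are the `x` with `v(x)` proportional to `v(x̄)`, i.e. with
`log v(x) - log v(x̄) = Bᵀ (ρ⃗(x) - ρ⃗(x̄))` constant, which is orthogonality to `D`.
For existence, `Bᵀ` is onto, so `Bᵀ y = log w` for a positive kernel vector `w`, and `θ`, being
onto `[0, ∞)`, realises `ρ⃗(x) = y`.
-/

open Matrix Finset

theorem Matrix.mem_of_pow_apply_pos {ι R : Type*} [Fintype ι] [DecidableEq ι]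
    [Ring R] [LinearOrder R] [IsStrictOrderedRing R]
    {P : Matrix ι ι R} (hP : ∀ i j, 0 ≤ P i j) {s : Set ι}
    (hs : ∀ i ∈ s, ∀ j, 0 < P i j → j ∈ s) (r : ℕ) {i j : ι} (hi : i ∈ s)
    (hij : 0 < (P ^ r) i j) : j ∈ s := by
  induction r generalizing j with
  | zero =>
    by_cases h : i = j
    · exact h ▸ hi
    · simp [one_apply_ne h] at hij
  | succ r ih =>
    rw [pow_succ, mul_apply] at hij
    obtain ⟨l, -, hl⟩ :=
      exists_lt_of_sum_lt (s := univ) (f := fun _ => (0 : R)) (by simpa using hij)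
    obtain ⟨hil, hlj⟩ := (pos_and_pos_or_neg_and_neg_of_mul_pos hl).resolve_right
      fun h => (hP l j).not_gt h.2
    exact hs l (ih hil) j hlj

theorem Matrix.mulVec_injective_of_rank_eq_card {K ι κ : Type*} [Field K] [Fintype ι]
    [DecidableEq ι] {B : Matrix κ ι K} (hB : B.rank = Fintype.card ι) :
    Function.Injective B.mulVec := by
  have := B.mulVecLin.finrank_range_add_finrank_ker
  rw [← Matrix.rank, hB, Module.finrank_fintype_fun_eq_card, add_eq_left,
    Submodule.finrank_eq_zero] at this
  exact LinearMap.ker_eq_bot.mp this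

theorem Matrix.vecMul_surjective_of_rank_eq_card {K ι κ : Type*} [Field K] [Fintype ι]
    [Fintype κ] {B : Matrix κ ι K} (hB : B.rank = Fintype.card ι) :
    Function.Surjective (· ᵥ* B) := by
  have : LinearMap.range Bᵀ.mulVecLin = ⊤ := by
    apply Submodule.eq_top_of_finrank_eq
    rw [← Matrix.rank, rank_transpose, hB, Module.finrank_fintype_fun_eq_card]
  intro z
  obtain ⟨y, hy⟩ := LinearMap.range_eq_top.mp this z
  exact ⟨y, by simpa [Matrix.mulVec_transpose] using hy⟩

namespace MassAction

section Laplacian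

variable {ι : Type*} [Fintype ι] [DecidableEq ι]

def laplacian (A : Matrix ι ι ℝ) : Matrix ι ι ℝ := A - diagonal fun j => ∑ i, A i j

theorem laplacian_mulVec_apply (A : Matrix ι ι ℝ) (u : ι → ℝ) (i : ι) :
    (laplacian A *ᵥ u) i = ∑ j, A i j * u j - (∑ k, A k i) * u i := by
  simp [laplacian, sub_mul, sum_sub_distrib, diagonal_apply, mulVec, dotProduct]

theorem one_vecMul_laplacian (A : Matrix ι ι ℝ) : (fun _ => 1) ᵥ* laplacian A = 0 := by
  ext j
  simp [laplacian, vecMul, dotProduct, diagonal_apply]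

theorem sum_laplacian_mulVec (A : Matrix ι ι ℝ) (u : ι → ℝ) :
    ∑ i, (laplacian A *ᵥ u) i = 0 := by
  simpa [dotProduct, one_vecMul_laplacian] using dotProduct_mulVec (fun _ => 1) (laplacian A) u

theorem sum_sum_mul_sub_eq_mulVec_laplacian_mulVec {κ : Type*} (A : Matrix ι ι ℝ)
    (B : Matrix κ ι ℝ) (v : ι → ℝ) (k : κ) :
    ∑ i, ∑ j, A i j * v j * (B k i - B k j) = (B *ᵥ (laplacian A *ᵥ v)) k := by
  calc ∑ i, ∑ j, A i j * v j * (B k i - B k j)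
      = ∑ i, B k i * (∑ j, A i j * v j - (∑ l, A l i) * v i) := by
        simp only [mul_sub, sum_sub_distrib, mul_sum, sum_mul]
        rw [sum_comm (f := fun i j => A i j * v j * B k j)]
        congr 1 <;> exact sum_congr rfl fun i _ => sum_congr rfl fun j _ => by ring
    _ = ∑ i, B k i * (laplacian A *ᵥ v) i := by simp only [laplacian_mulVec_apply]
    _ = (B *ᵥ (laplacian A *ᵥ v)) k := rfl

section Nonneg

variable {A : Matrix ι ι ℝ} (hA : ∀ i j, 0 ≤ A i j)
include hA

theorem apply_eq_zero_of_laplacian_mulVec_eq_zero {u : ι → ℝ} (hu : ∀ i, 0 ≤ u i)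
    (hLu : laplacian A *ᵥ u = 0) {l k : ι} (hl : u l = 0) (hlk : 0 < (1 + A) l k) :
    u k = 0 := by
  have hrow : ∑ j, A l j * u j = 0 := by
    simpa [laplacian_mulVec_apply, hl] using congrFun hLu l
  have hAlk := (sum_eq_zero_iff_of_nonneg fun j _ => mul_nonneg (hA l j) (hu j)).mp hrow k
    (mem_univ k)
  by_cases h : l = k
  · exact h ▸ hl
  · simp only [Matrix.add_apply, one_apply_ne h, zero_add] at hlk
    exact (mul_eq_zero.mp hAlk).resolve_left hlk.ne'

variable (hirr : ∀ i j : ι, ∃ r : ℕ, 0 < ((1 + A) ^ r) i j)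
include hirr

theorem eq_zero_of_laplacian_mulVec_eq_zero {u : ι → ℝ} (hu : ∀ i, 0 ≤ u i)
    (hLu : laplacian A *ᵥ u = 0) {i : ι} (hi : u i = 0) : u = 0 := by
  have h1A : ∀ i j, 0 ≤ (1 + A) i j := fun i j => add_nonneg (by
    rw [one_apply]; split_ifs <;> norm_num) (hA i j)
  funext k
  obtain ⟨r, hr⟩ := hirr i k
  exact Matrix.mem_of_pow_apply_pos h1A (s := {k | u k = 0})
    (fun l hl k hlk => apply_eq_zero_of_laplacian_mulVec_eq_zero hA hu hLu hl hlk) r hi hr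

omit hirr in
theorem laplacian_mulVec_abs {v : ι → ℝ} (hv : laplacian A *ᵥ v = 0) :
    laplacian A *ᵥ |v| = 0 := by
  have hnn : ∀ i, 0 ≤ (laplacian A *ᵥ |v|) i := by
    intro i
    have hrow : ∑ j, A i j * v j = (∑ k, A k i) * v i := by
      simpa [laplacian_mulVec_apply, sub_eq_zero] using congrFun hv i
    have hs : 0 ≤ ∑ k, A k i := sum_nonneg fun k _ => hA k i
    rw [laplacian_mulVec_apply, sub_nonneg]
    calc (∑ k, A k i) * |v| i = |∑ j, A i j * v j| := by
          rw [hrow, abs_mul, abs_of_nonneg hs, Pi.abs_apply]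
      _ ≤ ∑ j, |A i j * v j| := abs_sum_le_sum_abs _ _
      _ = ∑ j, A i j * |v| j := by simp only [abs_mul, abs_of_nonneg (hA i _), Pi.abs_apply]
  funext i
  exact (sum_eq_zero_iff_of_nonneg fun i _ => hnn i).mp (sum_laplacian_mulVec A |v|) i
    (mem_univ i)

theorem exists_pos_laplacian_mulVec_eq_zero :
    ∃ w : ι → ℝ, (∀ i, 0 < w i) ∧ laplacian A *ᵥ w = 0 := by
  rcases isEmpty_or_nonempty ι with hι | hι
  · exact ⟨0, isEmptyElim, Subsingleton.elim _ _⟩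
  have hdet : (laplacian A).det = 0 := exists_vecMul_eq_zero_iff.mp
    ⟨fun _ => 1, fun h => by simpa using congrFun h (Classical.arbitrary ι),
      one_vecMul_laplacian A⟩
  obtain ⟨v, hv0, hv⟩ := exists_mulVec_eq_zero_iff.mpr hdet
  have habs := laplacian_mulVec_abs hA hv
  refine ⟨|v|, fun i => (abs_nonneg (v i)).lt_of_ne' fun hi => hv0 ?_, habs⟩
  have habs0 := eq_zero_of_laplacian_mulVec_eq_zero hA hirr (fun j => abs_nonneg (v j)) habs hi
  exact funext fun j => abs_eq_zero.mp (congrFun habs0 j)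

theorem laplacian_mulVec_eq_zero_iff_div_eq {u v : ι → ℝ} (hu : ∀ i, 0 < u i)
    (hLu : laplacian A *ᵥ u = 0) :
    laplacian A *ᵥ v = 0 ↔ ∀ i j, v i / u i = v j / u j := by
  constructor
  · intro hLv i j
    -- with `t` the least ratio, `v - t • u` is a nonnegative kernel vector vanishing at `p`
    obtain ⟨p, -, hp⟩ := exists_min_image univ (fun j => v j / u j) ⟨i, mem_univ i⟩
    set t := v p / u p
    have hzero : v - t • u = 0 := by
      refine eq_zero_of_laplacian_mulVec_eq_zero hA hirr (i := p) (fun j => ?_) ?_ ?_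
      · simpa [sub_nonneg] using (le_div_iff₀ (hu j)).mp (hp j (mem_univ j))
      · rw [mulVec_sub, mulVec_smul, hLv, hLu, smul_zero, sub_zero]
      · simp [t, div_mul_cancel₀ _ (hu p).ne']
    have hratio : ∀ j, v j / u j = t := fun j => by
      rw [div_eq_iff (hu j).ne']
      simpa [sub_eq_zero] using congrFun hzero j
    rw [hratio, hratio]
  · intro h
    funext i
    have hv : v = (v i / u i) • u := funext fun j => by
      rw [Pi.smul_apply, smul_eq_mul, h i j, div_mul_cancel₀ _ (hu j).ne']
    rw [hv, mulVec_smul, hLu, smul_zero]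

end Nonneg

end Laplacian

section Monomials

variable {ι κ : Type*} [Fintype κ]

noncomputable def monomials (B : Matrix κ ι ℝ) (z : κ → ℝ) : ι → ℝ :=
  fun j => ∏ l, z l ^ B l j

theorem monomials_pos (B : Matrix κ ι ℝ) {z : κ → ℝ} (hz : ∀ l, 0 < z l) (j : ι) :
    0 < monomials B z j :=
  prod_pos fun l _ => Real.rpow_pos_of_pos (hz l) _

theorem monomials_eq_exp (B : Matrix κ ι ℝ) {z : κ → ℝ} (hz : ∀ l, 0 < z l) (j : ι) :
    monomials B z j = Real.exp (((fun l => Real.log (z l)) ᵥ* B) j) := by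
  simp only [monomials, vecMul, dotProduct, Real.exp_sum, Real.rpow_def_of_pos (hz _)]

theorem monomials_div_eq_iff (B : Matrix κ ι ℝ) {z w : κ → ℝ} (hz : ∀ l, 0 < z l)
    (hw : ∀ l, 0 < w l) (i j : ι) :
    monomials B z i / monomials B w i = monomials B z j / monomials B w j ↔
      ∑ k, (B k i - B k j) * (Real.log (z k) - Real.log (w k)) = 0 := by
  set ρz := fun l => Real.log (z l)
  set ρw := fun l => Real.log (w l)
  have hsum : ∑ k, (B k i - B k j) * (ρz k - ρw k)
      = ((ρz ᵥ* B) i - (ρw ᵥ* B) i) - ((ρz ᵥ* B) j - (ρw ᵥ* B) j) := by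
    simp only [vecMul, dotProduct, ← sum_sub_distrib]
    exact sum_congr rfl fun k _ => by ring
  rw [monomials_eq_exp B hz, monomials_eq_exp B hw, monomials_eq_exp B hz, monomials_eq_exp B hw,
    ← Real.exp_sub, ← Real.exp_sub, Real.exp_eq_exp, hsum, sub_eq_zero]

end Monomials

end MassAction

open MassAction

theorem stmt_10
    (n m : ℕ)
    (θ : ℝ → ℝ)
    (hθ0 : θ 0 = 0)
    (hθmono : StrictMonoOn θ (Set.Ici (0:ℝ)))
    (hθonto : ∀ r : ℝ, 0 ≤ r → ∃ y : ℝ, 0 ≤ y ∧ θ y = r)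
    (A : Matrix (Fin m) (Fin m) ℝ)
    (hAnn : ∀ i j, 0 ≤ A i j)
    (hAirr : ∀ i j, 0 < ((1 + A) ^ (m - 1)) i j)
    (B : Matrix (Fin n) (Fin m) ℝ)
    (hBrank : B.rank = m)
    (f : EuclideanSpace ℝ (Fin n) → EuclideanSpace ℝ (Fin n))
    (hf : ∀ x : EuclideanSpace ℝ (Fin n), ∀ k : Fin n,
      f x k = ∑ i : Fin m, ∑ j : Fin m,
        A i j * (∏ l : Fin n, θ (x l) ^ (B l j)) * (B k i - B k j))
    :
    (∃ xbar : EuclideanSpace ℝ (Fin n), (∀ k, 0 < xbar k) ∧ f xbar = 0) ∧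
    (∀ xbar : EuclideanSpace ℝ (Fin n), (∀ k, 0 < xbar k) → f xbar = 0 →
      ∀ x : EuclideanSpace ℝ (Fin n), (∀ k, 0 < x k) →
        (f x = 0 ↔ ∀ i j : Fin m,
          ∑ k, (B k i - B k j) * (Real.log (θ (x k)) - Real.log (θ (xbar k))) = 0)) := by
  have hθpos : ∀ y, 0 < y → 0 < θ y := fun y hy => hθ0 ▸ hθmono Set.self_mem_Ici hy.le hy
  have hirr : ∀ i j, ∃ r : ℕ, 0 < ((1 + A) ^ r) i j := fun i j => ⟨m - 1, hAirr i j⟩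
  have hB : B.rank = Fintype.card (Fin m) := hBrank.trans (Fintype.card_fin m).symm
  have hfv : ∀ x, f x = 0 ↔ laplacian A *ᵥ monomials B (fun l => θ (x l)) = 0 := fun x => by
    have hfx : (f x).ofLp = B *ᵥ (laplacian A *ᵥ monomials B fun l => θ (x l)) :=
      funext fun k => (hf x k).trans (sum_sum_mul_sub_eq_mulVec_laplacian_mulVec A B _ k)
    rw [← WithLp.ofLp_eq_zero, hfx, (mulVec_injective_of_rank_eq_card hB).eq_iff' (mulVec_zero B)]
  refine ⟨?_, fun xbar hxbar hfxbar x hx => ?_⟩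
  · obtain ⟨w, hwpos, hLw⟩ := exists_pos_laplacian_mulVec_eq_zero hAnn hirr
    obtain ⟨y, hy⟩ := vecMul_surjective_of_rank_eq_card hB fun j => Real.log (w j)
    have hθsurj : ∀ l, ∃ x > 0, θ x = Real.exp (y l) := fun l => by
      obtain ⟨x, hx0, hx⟩ := hθonto _ (Real.exp_pos (y l)).le
      refine ⟨x, hx0.lt_of_ne ?_, hx⟩
      rintro rfl
      exact (Real.exp_pos (y l)).ne (hθ0 ▸ hx)
    choose x hxpos hθx using hθsurj
    refine ⟨WithLp.toLp 2 x, hxpos, (hfv _).mpr ?_⟩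
    have hwx : monomials B (fun l => θ (x l)) = w := funext fun j => by
      rw [monomials_eq_exp B fun l => hθpos _ (hxpos l)]
      simp only [hθx, Real.log_exp, hy, Real.exp_log (hwpos j)]
    exact hwx ▸ hLw
  · rw [hfv, laplacian_mulVec_eq_zero_iff_div_eq hAnn hirr
      (monomials_pos B fun l => hθpos _ (hxbar l)) ((hfv xbar).mp hfxbar)]
    exact forall₂_congr fun i j => monomials_div_eq_iff B (fun l => hθpos _ (hx l))
      (fun l => hθpos _ (hxbar l)) i j
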